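/- Let p be a prime and β₁, …, β₇ integers none of which is divisible by p. Let g_{ij}(X,Y,Z) be the entries of the 6×6 matrix of linear forms [[Y, X, β₁X, 0, β₂X+β₃Z, β₄Z], [0, Z, X, β₅Z, 0, 0], [0, 0, Z, X, 0, 0], [0, 0, 0, Z, X, 0], [0, 0, 0, 0, Z, X], [β₆X, 0, 0, 0, 0, Y+β₇Z]]. For j ∈ {1,…,6} let C(j) be the 6×3 integer matrix whose k-th row lists the coefficients of X, Y, Z in g_{jk}, and for j ∈ {7,…,12} let C(j) be the 6×3 integer matrix whose k-th row lists the coefficients of X, Y, Z in g_{k,j−6}. Let M = (m_{ij}) be a 12×12 upper triangular integer matrix with diagonal entries m_{ii} = p^{a_i} (a_i ∈ ℕ), and let N be the 3×3 upper triangular integer matrix with rows (p^{b₁'}, a, b), (0, p^{b₂'}, c), (0, 0, p^{b₃'}) (b_j' ∈ ℕ, a, b, c ∈ ℤ), with adjugate N⁺. Suppose that for every i ∈ {1,…,12}: for each j ∈ {1,…,6} every entry of the row vector (m_{i7}, …, m_{i12})·C(j)·N⁺ is divisible by p^{b₁'+b₂'+b₃'}, and for each j ∈ {7,…,12} every entry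 of (m_{i1}, …, m_{i6})·C(j)·N⁺ is divisible by p^{b₁'+b₂'+b₃'}. Then: (1) a₁, …, a₇, a₉, a₁₀, a₁₁, a₁₂ ≥ b₁'; (2) a₂, a₄, a₅, a₁₂ ≥ b₃'; (3) a₆, a₁₂ ≥ b₂'. -/
import Mathlib


open Matrix

/-- `gCoeff β j k` is the triple of coefficients of `X, Y, Z` in the entry `g_{jk}` of the
`6×6` matrix of linear forms
`[[Y, X, β₁X, 0, β₂X+β₃Z, β₄Z], [0, Z, X, β₅Z, 0, 0], [0, 0, Z, X, 0, 0],
  [0, 0, 0, Z, X, 0], [0, 0, 0, 0, Z, X], [β₆X, 0, 0, 0, 0, Y+β₇Z]]`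
(here `β : Fin 7 → ℤ` lists `β₁, …, β₇`). -/
def gCoeff (β : Fin 7 → ℤ) : Fin 6 → Fin 6 → Fin 3 → ℤ :=
  ![![![0, 1, 0], ![1, 0, 0], ![β 0, 0, 0], ![0, 0, 0], ![β 1, 0, β 2], ![0, 0, β 3]],
    ![![0, 0, 0], ![0, 0, 1], ![1, 0, 0], ![0, 0, β 4], ![0, 0, 0], ![0, 0, 0]],
    ![![0, 0, 0], ![0, 0, 0], ![0, 0, 1], ![1, 0, 0], ![0, 0, 0], ![0, 0, 0]],
    ![![0, 0, 0], ![0, 0, 0], ![0, 0, 0], ![0, 0, 1], ![1, 0, 0], ![0, 0, 0]],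
    ![![0, 0, 0], ![0, 0, 0], ![0, 0, 0], ![0, 0, 0], ![0, 0, 1], ![1, 0, 0]],
    ![![β 5, 0, 0], ![0, 0, 0], ![0, 0, 0], ![0, 0, 0], ![0, 0, 0], ![0, 1, β 6]]]

/-- For `j ∈ {1,…,6}`, the `6×3` matrix `C(j)` whose `k`-th row lists the coefficients of
`X, Y, Z` in `g_{jk}`. -/
def CmatFst (β : Fin 7 → ℤ) (j : Fin 6) : Matrix (Fin 6) (Fin 3) ℤ :=
  Matrix.of fun k t => gCoeff β j k t

/-- For `j ∈ {7,…,12}`, the `6×3` matrix `C(j)` whose `k`-th row lists the coefficients of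
`X, Y, Z` in `g_{k,j−6}`. -/
def CmatSnd (β : Fin 7 → ℤ) (j : Fin 6) : Matrix (Fin 6) (Fin 3) ℤ :=
  Matrix.of fun k t => gCoeff β k j t

/-- The upper triangular matrix `N`. -/
def NmatZ (p : ℕ) (b₁ b₂ b₃ : ℕ) (a b c : ℤ) : Matrix (Fin 3) (Fin 3) ℤ :=
  !![(p : ℤ) ^ b₁, a, b; 0, (p : ℤ) ^ b₂, c; 0, 0, (p : ℤ) ^ b₃]


set_option maxHeartbeats 1000000 in
lemma keyLem {p : ℕ} (hp : p.Prime) {u x : ℤ} (hu : ¬(p:ℤ) ∣ u) {B e : ℕ}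
    (h : (p:ℤ)^B ∣ x) (hx : x = u * (p:ℤ)^e) : B ≤ e := by
  subst hx
  have hpz : Prime (p:ℤ) := Nat.prime_iff_prime_int.1 hp
  have hcop : IsCoprime ((p:ℤ)^B) u := IsCoprime.pow_left ((hpz.coprime_iff_not_dvd).mpr hu)
  have h2 : (p:ℤ)^B ∣ (p:ℤ)^e := hcop.dvd_of_dvd_mul_left h
  exact (pow_dvd_pow_iff hpz.ne_zero hpz.not_unit).mp h2

lemma cons_val_five {α : Type*} {m : ℕ} (x : α) (u : Fin (m+5) → α) :
    Matrix.vecCons x u 5 = Matrix.vecHead (Matrix.vecTail (Matrix.vecTail (Matrix.vecTail (Matrix.vecTail u)))) :=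
  rfl

set_option maxHeartbeats 2000000 in
/-- Let `p` be a prime and `β₁, …, β₇` integers not divisible by `p`. Let
`M` be a `12×12` upper triangular integer matrix with diagonal entries `p^{a_i}` and `N` the
`3×3` upper triangular integer matrix with rows `(p^{b₁'}, a, b)`, `(0, p^{b₂'}, c)`,
`(0, 0, p^{b₃'})`, with adjugate `N⁺`. Suppose that for every `i`: for each `j ∈ {1,…,6}`
every entry of `(m_{i7}, …, m_{i12})·C(j)·N⁺` is divisible by `p^{b₁'+b₂'+b₃'}`, and for each
`j ∈ {7,…,12}` every entry of `(m_{i1}, …, m_{i6})·C(j)·N⁺` is divisible by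
`p^{b₁'+b₂'+b₃'}`. Then (1) `a₁, …, a₇, a₉, a₁₀, a₁₁, a₁₂ ≥ b₁'`; (2) `a₂, a₄, a₅, a₁₂ ≥ b₃'`;
(3) `a₆, a₁₂ ≥ b₂'`. -/
theorem stmt_16 (p : ℕ) (hp : p.Prime) (β : Fin 7 → ℤ) (hpβ : ∀ i, ¬ (p : ℤ) ∣ β i)
    (M : Matrix (Fin 12) (Fin 12) ℤ) (hMtri : ∀ i j : Fin 12, (j : ℕ) < (i : ℕ) → M i j = 0)
    (d : Fin 12 → ℕ) (hMdiag : ∀ i : Fin 12, M i i = (p : ℤ) ^ d i)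
    (b₁' b₂' b₃' : ℕ) (a b c : ℤ)
    (hdvd : ∀ i : Fin 12,
      (∀ j : Fin 6, ∀ k : Fin 3,
        (p : ℤ) ^ (b₁' + b₂' + b₃') ∣
          Matrix.vecMul (fun t : Fin 6 => M i (Fin.natAdd 6 t))
            (CmatFst β j * (NmatZ p b₁' b₂' b₃' a b c).adjugate) k) ∧
      (∀ j : Fin 6, ∀ k : Fin 3,
        (p : ℤ) ^ (b₁' + b₂' + b₃') ∣
          Matrix.vecMul (fun t : Fin 6 => M i (Fin.castAdd 6 t))
            (CmatSnd β j * (NmatZ p b₁' b₂' b₃' a b c).adjugate) k)) :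
    (∀ i : Fin 12, i ≠ 7 → b₁' ≤ d i) ∧
      (b₃' ≤ d 1 ∧ b₃' ≤ d 3 ∧ b₃' ≤ d 4 ∧ b₃' ≤ d 11) ∧
      (b₂' ≤ d 5 ∧ b₂' ≤ d 11) := by
  have hone : ¬ (p:ℤ) ∣ 1 := by
    simpa using (Nat.prime_iff_prime_int.1 hp).not_dvd_one
  have hb0 : b₁' ≤ d 0 := by
    have hv : (fun t : Fin 6 => M 0 (Fin.castAdd 6 t)) = ![(p:ℤ)^(d 0),M 0 1,M 0 2,M 0 3,M 0 4,M 0 5] := by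
      funext t; fin_cases t
      · exact hMdiag 0
      · rfl
      · rfl
      · rfl
      · rfl
      · rfl
    have h := (hdvd 0).2 1 0
    rw [hv] at h
    simp [Matrix.vecMul, dotProduct, Matrix.mul_apply, CmatFst, CmatSnd, gCoeff, NmatZ,
      Matrix.adjugate_fin_three, Fin.sum_univ_succ, Matrix.vecHead, Matrix.vecTail,
      Matrix.cons_val_two, Matrix.cons_val_three, Matrix.cons_val_four, cons_val_five] at h
    have := keyLem hp hone h (e := d 0 + b₂' + b₃') (by ring)
    omega
  have hb1 : b₁' ≤ d 1 := by
    have hv : (fun t : Fin 6 => M 1 (Fin.castAdd 6 t)) = ![0,(p:ℤ)^(d 1),M 1 2,M 1 3,M 1 4,M 1 5] := by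
      funext t; fin_cases t
      · exact hMtri _ _ (by decide)
      · exact hMdiag 1
      · rfl
      · rfl
      · rfl
      · rfl
    have h := (hdvd 1).2 2 0
    rw [hv] at h
    simp [Matrix.vecMul, dotProduct, Matrix.mul_apply, CmatFst, CmatSnd, gCoeff, NmatZ,
      Matrix.adjugate_fin_three, Fin.sum_univ_succ, Matrix.vecHead, Matrix.vecTail,
      Matrix.cons_val_two, Matrix.cons_val_three, Matrix.cons_val_four, cons_val_five] at h
    have := keyLem hp hone h (e := d 1 + b₂' + b₃') (by ring)
    omega
  have hb2 : b₁' ≤ d 2 := by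
    have hv : (fun t : Fin 6 => M 2 (Fin.castAdd 6 t)) = ![0,0,(p:ℤ)^(d 2),M 2 3,M 2 4,M 2 5] := by
      funext t; fin_cases t
      · exact hMtri _ _ (by decide)
      · exact hMtri _ _ (by decide)
      · exact hMdiag 2
      · rfl
      · rfl
      · rfl
    have h := (hdvd 2).2 3 0
    rw [hv] at h
    simp [Matrix.vecMul, dotProduct, Matrix.mul_apply, CmatFst, CmatSnd, gCoeff, NmatZ,
      Matrix.adjugate_fin_three, Fin.sum_univ_succ, Matrix.vecHead, Matrix.vecTail,
      Matrix.cons_val_two, Matrix.cons_val_three, Matrix.cons_val_four, cons_val_five] at h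
    have := keyLem hp hone h (e := d 2 + b₂' + b₃') (by ring)
    omega
  have hb3 : b₁' ≤ d 3 := by
    have hv : (fun t : Fin 6 => M 3 (Fin.castAdd 6 t)) = ![0,0,0,(p:ℤ)^(d 3),M 3 4,M 3 5] := by
      funext t; fin_cases t
      · exact hMtri _ _ (by decide)
      · exact hMtri _ _ (by decide)
      · exact hMtri _ _ (by decide)
      · exact hMdiag 3
      · rfl
      · rfl
    have h := (hdvd 3).2 4 0
    rw [hv] at h
    simp [Matrix.vecMul, dotProduct, Matrix.mul_apply, CmatFst, CmatSnd, gCoeff, NmatZ,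
      Matrix.adjugate_fin_three, Fin.sum_univ_succ, Matrix.vecHead, Matrix.vecTail,
      Matrix.cons_val_two, Matrix.cons_val_three, Matrix.cons_val_four, cons_val_five] at h
    have := keyLem hp hone h (e := d 3 + b₂' + b₃') (by ring)
    omega
  have hb4 : b₁' ≤ d 4 := by
    have hv : (fun t : Fin 6 => M 4 (Fin.castAdd 6 t)) = ![0,0,0,0,(p:ℤ)^(d 4),M 4 5] := by
      funext t; fin_cases t
      · exact hMtri _ _ (by decide)
      · exact hMtri _ _ (by decide)
      · exact hMtri _ _ (by decide)
      · exact hMtri _ _ (by decide)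
      · exact hMdiag 4
      · rfl
    have h := (hdvd 4).2 5 0
    rw [hv] at h
    simp [Matrix.vecMul, dotProduct, Matrix.mul_apply, CmatFst, CmatSnd, gCoeff, NmatZ,
      Matrix.adjugate_fin_three, Fin.sum_univ_succ, Matrix.vecHead, Matrix.vecTail,
      Matrix.cons_val_two, Matrix.cons_val_three, Matrix.cons_val_four, cons_val_five] at h
    have := keyLem hp hone h (e := d 4 + b₂' + b₃') (by ring)
    omega
  have hb5 : b₁' ≤ d 5 := by
    have hv : (fun t : Fin 6 => M 5 (Fin.castAdd 6 t)) = ![0,0,0,0,0,(p:ℤ)^(d 5)] := by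
      funext t; fin_cases t
      · exact hMtri _ _ (by decide)
      · exact hMtri _ _ (by decide)
      · exact hMtri _ _ (by decide)
      · exact hMtri _ _ (by decide)
      · exact hMtri _ _ (by decide)
      · exact hMdiag 5
    have h := (hdvd 5).2 0 0
    rw [hv] at h
    simp [Matrix.vecMul, dotProduct, Matrix.mul_apply, CmatFst, CmatSnd, gCoeff, NmatZ,
      Matrix.adjugate_fin_three, Fin.sum_univ_succ, Matrix.vecHead, Matrix.vecTail,
      Matrix.cons_val_two, Matrix.cons_val_three, Matrix.cons_val_four, cons_val_five] at h
    have := keyLem hp (hpβ 5) h (e := d 5 + b₂' + b₃') (by ring)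
    omega
  have hb6 : b₁' ≤ d 6 := by
    have hv : (fun t : Fin 6 => M 6 (Fin.natAdd 6 t)) = ![(p:ℤ)^(d 6),M 6 7,M 6 8,M 6 9,M 6 10,M 6 11] := by
      funext t; fin_cases t
      · exact hMdiag 6
      · rfl
      · rfl
      · rfl
      · rfl
      · rfl
    have h := (hdvd 6).1 5 0
    rw [hv] at h
    simp [Matrix.vecMul, dotProduct, Matrix.mul_apply, CmatFst, CmatSnd, gCoeff, NmatZ,
      Matrix.adjugate_fin_three, Fin.sum_univ_succ, Matrix.vecHead, Matrix.vecTail,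
      Matrix.cons_val_two, Matrix.cons_val_three, Matrix.cons_val_four, cons_val_five] at h
    have := keyLem hp (hpβ 5) h (e := d 6 + b₂' + b₃') (by ring)
    omega
  have hb8 : b₁' ≤ d 8 := by
    have hv : (fun t : Fin 6 => M 8 (Fin.natAdd 6 t)) = ![0,0,(p:ℤ)^(d 8),M 8 9,M 8 10,M 8 11] := by
      funext t; fin_cases t
      · exact hMtri _ _ (by decide)
      · exact hMtri _ _ (by decide)
      · exact hMdiag 8
      · rfl
      · rfl
      · rfl
    have h := (hdvd 8).1 1 0
    rw [hv] at h
    simp [Matrix.vecMul, dotProduct, Matrix.mul_apply, CmatFst, CmatSnd, gCoeff, NmatZ,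
      Matrix.adjugate_fin_three, Fin.sum_univ_succ, Matrix.vecHead, Matrix.vecTail,
      Matrix.cons_val_two, Matrix.cons_val_three, Matrix.cons_val_four, cons_val_five] at h
    have := keyLem hp hone h (e := d 8 + b₂' + b₃') (by ring)
    omega
  have hb9 : b₁' ≤ d 9 := by
    have hv : (fun t : Fin 6 => M 9 (Fin.natAdd 6 t)) = ![0,0,0,(p:ℤ)^(d 9),M 9 10,M 9 11] := by
      funext t; fin_cases t
      · exact hMtri _ _ (by decide)
      · exact hMtri _ _ (by decide)
      · exact hMtri _ _ (by decide)
      · exact hMdiag 9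
      · rfl
      · rfl
    have h := (hdvd 9).1 2 0
    rw [hv] at h
    simp [Matrix.vecMul, dotProduct, Matrix.mul_apply, CmatFst, CmatSnd, gCoeff, NmatZ,
      Matrix.adjugate_fin_three, Fin.sum_univ_succ, Matrix.vecHead, Matrix.vecTail,
      Matrix.cons_val_two, Matrix.cons_val_three, Matrix.cons_val_four, cons_val_five] at h
    have := keyLem hp hone h (e := d 9 + b₂' + b₃') (by ring)
    omega
  have hb10 : b₁' ≤ d 10 := by
    have hv : (fun t : Fin 6 => M 10 (Fin.natAdd 6 t)) = ![0,0,0,0,(p:ℤ)^(d 10),M 10 11] := by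
      funext t; fin_cases t
      · exact hMtri _ _ (by decide)
      · exact hMtri _ _ (by decide)
      · exact hMtri _ _ (by decide)
      · exact hMtri _ _ (by decide)
      · exact hMdiag 10
      · rfl
    have h := (hdvd 10).1 3 0
    rw [hv] at h
    simp [Matrix.vecMul, dotProduct, Matrix.mul_apply, CmatFst, CmatSnd, gCoeff, NmatZ,
      Matrix.adjugate_fin_three, Fin.sum_univ_succ, Matrix.vecHead, Matrix.vecTail,
      Matrix.cons_val_two, Matrix.cons_val_three, Matrix.cons_val_four, cons_val_five] at h
    have := keyLem hp hone h (e := d 10 + b₂' + b₃') (by ring)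
    omega
  have hb11 : b₁' ≤ d 11 := by
    have hv : (fun t : Fin 6 => M 11 (Fin.natAdd 6 t)) = ![0,0,0,0,0,(p:ℤ)^(d 11)] := by
      funext t; fin_cases t
      · exact hMtri _ _ (by decide)
      · exact hMtri _ _ (by decide)
      · exact hMtri _ _ (by decide)
      · exact hMtri _ _ (by decide)
      · exact hMtri _ _ (by decide)
      · exact hMdiag 11
    have h := (hdvd 11).1 4 0
    rw [hv] at h
    simp [Matrix.vecMul, dotProduct, Matrix.mul_apply, CmatFst, CmatSnd, gCoeff, NmatZ,
      Matrix.adjugate_fin_three, Fin.sum_univ_succ, Matrix.vecHead, Matrix.vecTail,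
      Matrix.cons_val_two, Matrix.cons_val_three, Matrix.cons_val_four, cons_val_five] at h
    have := keyLem hp hone h (e := d 11 + b₂' + b₃') (by ring)
    omega
  have hc1 : b₃' ≤ d 1 := by
    have hv : (fun t : Fin 6 => M 1 (Fin.castAdd 6 t)) = ![0,(p:ℤ)^(d 1),M 1 2,M 1 3,M 1 4,M 1 5] := by
      funext t; fin_cases t
      · exact hMtri _ _ (by decide)
      · exact hMdiag 1
      · rfl
      · rfl
      · rfl
      · rfl
    have h := (hdvd 1).2 1 2
    rw [hv] at h
    simp [Matrix.vecMul, dotProduct, Matrix.mul_apply, CmatFst, CmatSnd, gCoeff, NmatZ,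
      Matrix.adjugate_fin_three, Fin.sum_univ_succ, Matrix.vecHead, Matrix.vecTail,
      Matrix.cons_val_two, Matrix.cons_val_three, Matrix.cons_val_four, cons_val_five] at h
    have := keyLem hp hone h (e := d 1 + b₁' + b₂') (by ring)
    omega
  have hc3 : b₃' ≤ d 3 := by
    have hv : (fun t : Fin 6 => M 3 (Fin.castAdd 6 t)) = ![0,0,0,(p:ℤ)^(d 3),M 3 4,M 3 5] := by
      funext t; fin_cases t
      · exact hMtri _ _ (by decide)
      · exact hMtri _ _ (by decide)
      · exact hMtri _ _ (by decide)
      · exact hMdiag 3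
      · rfl
      · rfl
    have h := (hdvd 3).2 3 2
    rw [hv] at h
    simp [Matrix.vecMul, dotProduct, Matrix.mul_apply, CmatFst, CmatSnd, gCoeff, NmatZ,
      Matrix.adjugate_fin_three, Fin.sum_univ_succ, Matrix.vecHead, Matrix.vecTail,
      Matrix.cons_val_two, Matrix.cons_val_three, Matrix.cons_val_four, cons_val_five] at h
    have := keyLem hp hone h (e := d 3 + b₁' + b₂') (by ring)
    omega
  have hc4 : b₃' ≤ d 4 := by
    have hv : (fun t : Fin 6 => M 4 (Fin.castAdd 6 t)) = ![0,0,0,0,(p:ℤ)^(d 4),M 4 5] := by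
      funext t; fin_cases t
      · exact hMtri _ _ (by decide)
      · exact hMtri _ _ (by decide)
      · exact hMtri _ _ (by decide)
      · exact hMtri _ _ (by decide)
      · exact hMdiag 4
      · rfl
    have h := (hdvd 4).2 4 2
    rw [hv] at h
    simp [Matrix.vecMul, dotProduct, Matrix.mul_apply, CmatFst, CmatSnd, gCoeff, NmatZ,
      Matrix.adjugate_fin_three, Fin.sum_univ_succ, Matrix.vecHead, Matrix.vecTail,
      Matrix.cons_val_two, Matrix.cons_val_three, Matrix.cons_val_four, cons_val_five] at h
    have := keyLem hp hone h (e := d 4 + b₁' + b₂') (by ring)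
    omega
  have hc11 : b₃' ≤ d 11 := by
    have hv : (fun t : Fin 6 => M 11 (Fin.natAdd 6 t)) = ![0,0,0,0,0,(p:ℤ)^(d 11)] := by
      funext t; fin_cases t
      · exact hMtri _ _ (by decide)
      · exact hMtri _ _ (by decide)
      · exact hMtri _ _ (by decide)
      · exact hMtri _ _ (by decide)
      · exact hMtri _ _ (by decide)
      · exact hMdiag 11
    have h := (hdvd 11).1 0 2
    rw [hv] at h
    simp [Matrix.vecMul, dotProduct, Matrix.mul_apply, CmatFst, CmatSnd, gCoeff, NmatZ,
      Matrix.adjugate_fin_three, Fin.sum_univ_succ, Matrix.vecHead, Matrix.vecTail,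
      Matrix.cons_val_two, Matrix.cons_val_three, Matrix.cons_val_four, cons_val_five] at h
    have := keyLem hp (hpβ 3) h (e := d 11 + b₁' + b₂') (by ring)
    omega
  have hd5 : b₂' ≤ d 5 := by
    have hv : (fun t : Fin 6 => M 5 (Fin.castAdd 6 t)) = ![0,0,0,0,0,(p:ℤ)^(d 5)] := by
      funext t; fin_cases t
      · exact hMtri _ _ (by decide)
      · exact hMtri _ _ (by decide)
      · exact hMtri _ _ (by decide)
      · exact hMtri _ _ (by decide)
      · exact hMtri _ _ (by decide)
      · exact hMdiag 5
    have h := (hdvd 5).2 5 1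
    rw [hv] at h
    simp [Matrix.vecMul, dotProduct, Matrix.mul_apply, CmatFst, CmatSnd, gCoeff, NmatZ,
      Matrix.adjugate_fin_three, Fin.sum_univ_succ, Matrix.vecHead, Matrix.vecTail,
      Matrix.cons_val_two, Matrix.cons_val_three, Matrix.cons_val_four, cons_val_five] at h
    have := keyLem hp hone h (e := d 5 + b₁' + b₃') (by ring)
    omega
  have hd11 : b₂' ≤ d 11 := by
    have hv : (fun t : Fin 6 => M 11 (Fin.natAdd 6 t)) = ![0,0,0,0,0,(p:ℤ)^(d 11)] := by
      funext t; fin_cases t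
      · exact hMtri _ _ (by decide)
      · exact hMtri _ _ (by decide)
      · exact hMtri _ _ (by decide)
      · exact hMtri _ _ (by decide)
      · exact hMtri _ _ (by decide)
      · exact hMdiag 11
    have h := (hdvd 11).1 5 1
    rw [hv] at h
    simp [Matrix.vecMul, dotProduct, Matrix.mul_apply, CmatFst, CmatSnd, gCoeff, NmatZ,
      Matrix.adjugate_fin_three, Fin.sum_univ_succ, Matrix.vecHead, Matrix.vecTail,
      Matrix.cons_val_two, Matrix.cons_val_three, Matrix.cons_val_four, cons_val_five] at h
    have := keyLem hp hone h (e := d 11 + b₁' + b₃') (by ring)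
    omega
  refine ⟨?_, ⟨hc1, hc3, hc4, hc11⟩, hd5, hd11⟩
  intro i hi
  fin_cases i
  · exact hb0
  · exact hb1
  · exact hb2
  · exact hb3
  · exact hb4
  · exact hb5
  · exact hb6
  · exact absurd rfl hi
  · exact hb8
  · exact hb9
  · exact hb10
  · exact hb11
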